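/- arXiv:2106.03758 — 5 statements merged into one kernel-verified Lean document; each statement's English description precedes it below -/
import Mathlib

section
/- Let λ* > 0, let λ̄ : ℝ≥0 → [0, λ*] be measurable, let Ī₀ ≥ 0, S̄₀ ≥ 0 with Ī₀ + S̄₀ ≤ 1, and let g : ℝ≥0 → ℝ≥0 be continuous with 0 ≤ g(t) ≤ λ* · Ī₀ for all t. Then there is at most one nonnegative continuous solution u : ℝ≥0 → ℝ≥0 of the Volterra-type equation u(t) = (S̄₀ − ∫₀ᵗ u(s) ds) · (g(t) + ∫₀ᵗ λ̄(t−s) u(s) ds) satisfying ∫₀ᵗ u(s) ds ≤ S̄₀ for all t ≥ 0. -/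
open MeasureTheory intervalIntegral

/-- Uniqueness of nonnegative continuous solutions to the boundary Volterra equation
    u(t) = (S̄₀ − ∫₀ᵗ u) (g(t) + ∫₀ᵗ λ̄(t−s) u(s) ds). -/
theorem volterra_boundary_uniqueness
    (lamStar : ℝ) (hlamStar : 0 < lamStar)
    (lam : ℝ → ℝ) (hlam_meas : Measurable lam)
    (hlam_bdd : ∀ t, 0 ≤ t → lam t ∈ Set.Icc 0 lamStar)
    (I0 S0 : ℝ) (hI0 : 0 ≤ I0) (hS0 : 0 ≤ S0) (hIS : I0 + S0 ≤ 1)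
    (g : ℝ → ℝ) (hg_cont : Continuous g)
    (hg_bdd : ∀ t, 0 ≤ t → g t ∈ Set.Icc 0 (lamStar * I0))
    (u v : ℝ → ℝ) (hu_cont : Continuous u) (hv_cont : Continuous v)
    (hu_nonneg : ∀ t, 0 ≤ t → 0 ≤ u t) (hv_nonneg : ∀ t, 0 ≤ t → 0 ≤ v t)
    (hu_eq : ∀ t, 0 ≤ t →
      u t = (S0 - ∫ s in (0:ℝ)..t, u s) * (g t + ∫ s in (0:ℝ)..t, lam (t - s) * u s))
    (hv_eq : ∀ t, 0 ≤ t →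
      v t = (S0 - ∫ s in (0:ℝ)..t, v s) * (g t + ∫ s in (0:ℝ)..t, lam (t - s) * v s))
    (hu_int : ∀ t, 0 ≤ t → (∫ s in (0:ℝ)..t, u s) ≤ S0)
    (hv_int : ∀ t, 0 ≤ t → (∫ s in (0:ℝ)..t, v s) ≤ S0) :
    ∀ t, 0 ≤ t → u t = v t := by
  have habs_cont : Continuous fun s => |u s - v s| := (hu_cont.sub hv_cont).abs
  -- integrability of the convolution-type integrand
  have key : ∀ w : ℝ → ℝ, Continuous w → (∀ s, 0 ≤ s → 0 ≤ w s) → ∀ t, 0 ≤ t →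
      IntervalIntegrable (fun s => lam (t - s) * w s) volume 0 t := by
    intro w hw hwn t ht
    apply IntervalIntegrable.mono_fun' ((continuous_const.mul hw).intervalIntegrable 0 t)
    · exact ((hlam_meas.comp (measurable_const.sub measurable_id)).mul
        hw.measurable).aestronglyMeasurable.restrict
    · rw [Set.uIoc_of_le ht]
      filter_upwards [ae_restrict_mem measurableSet_Ioc] with s hs
      have hs1 : 0 ≤ s := le_of_lt hs.1
      have ht' : 0 ≤ t - s := by linarith [hs.2]
      have h1 := hlam_bdd (t - s) ht'
      have h2 := hwn s hs1
      rw [Real.norm_eq_abs, abs_mul, abs_of_nonneg h1.1, abs_of_nonneg h2]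
      exact mul_le_mul_of_nonneg_right h1.2 h2
  -- the main a priori estimate
  have main : ∀ t, 0 ≤ t →
      |u t - v t| ≤ 2 * lamStar * ∫ s in (0:ℝ)..t, |u s - v s| := by
    intro t ht
    have hiu := hu_cont.intervalIntegrable (μ := volume) 0 t
    have hiv := hv_cont.intervalIntegrable (μ := volume) 0 t
    have hcu := key u hu_cont hu_nonneg t ht
    have hcv := key v hv_cont hv_nonneg t ht
    have h1 := hu_eq t ht
    have h2 := hv_eq t ht
    set W := ∫ s in (0:ℝ)..t, |u s - v s| with hW
    have hWnn : 0 ≤ W := intervalIntegral.integral_nonneg ht fun s _ => abs_nonneg _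
    set Au := S0 - ∫ s in (0:ℝ)..t, u s with hAu
    set Av := S0 - ∫ s in (0:ℝ)..t, v s with hAv
    set Bu := g t + ∫ s in (0:ℝ)..t, lam (t - s) * u s with hBu
    set Bv := g t + ∫ s in (0:ℝ)..t, lam (t - s) * v s with hBv
    have hAv0 : 0 ≤ Av := sub_nonneg.2 (hv_int t ht)
    have hAv1 : Av ≤ 1 := by
      have hvpos : 0 ≤ ∫ s in (0:ℝ)..t, v s :=
        intervalIntegral.integral_nonneg ht fun s hs => hv_nonneg s hs.1
      have : S0 ≤ 1 := by linarith
      rw [hAv]; linarith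
    have hBu0 : 0 ≤ Bu := by
      have hg1 := (hg_bdd t ht).1
      have h2 : 0 ≤ ∫ s in (0:ℝ)..t, lam (t - s) * u s :=
        intervalIntegral.integral_nonneg ht fun s hs =>
          mul_nonneg (hlam_bdd _ (by linarith [hs.2])).1 (hu_nonneg s hs.1)
      rw [hBu]; linarith
    have hBulam : Bu ≤ lamStar := by
      have hg2 := (hg_bdd t ht).2
      have h2 : (∫ s in (0:ℝ)..t, lam (t - s) * u s) ≤ ∫ s in (0:ℝ)..t, lamStar * u s :=
        intervalIntegral.integral_mono_on ht hcu
          ((continuous_const.mul hu_cont).intervalIntegrable 0 t)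
          (fun s hs => mul_le_mul_of_nonneg_right
            (hlam_bdd _ (by linarith [hs.2])).2 (hu_nonneg s hs.1))
      have h3 : (∫ s in (0:ℝ)..t, lamStar * u s) = lamStar * ∫ s in (0:ℝ)..t, u s :=
        intervalIntegral.integral_const_mul _ _
      have h4 := hu_int t ht
      have h5 : lamStar * (∫ s in (0:ℝ)..t, u s) ≤ lamStar * S0 :=
        mul_le_mul_of_nonneg_left h4 hlamStar.le
      rw [hBu]
      nlinarith
    have hAdiff : |Au - Av| ≤ W := by
      have hsub : Au - Av = ∫ s in (0:ℝ)..t, (v s - u s) := by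
        rw [intervalIntegral.integral_sub hiv hiu, hAu, hAv]; ring
      rw [hsub]
      calc |∫ s in (0:ℝ)..t, (v s - u s)|
          ≤ ∫ s in (0:ℝ)..t, |v s - u s| :=
            intervalIntegral.abs_integral_le_integral_abs ht
        _ = W := by rw [hW]; simp [abs_sub_comm]
    have hBdiff : |Bu - Bv| ≤ lamStar * W := by
      have hsub : Bu - Bv = ∫ s in (0:ℝ)..t, (lam (t - s) * u s - lam (t - s) * v s) := by
        rw [intervalIntegral.integral_sub hcu hcv, hBu, hBv]; ring
      rw [hsub]
      calc |∫ s in (0:ℝ)..t, (lam (t - s) * u s - lam (t - s) * v s)|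
          ≤ ∫ s in (0:ℝ)..t, |lam (t - s) * u s - lam (t - s) * v s| :=
            intervalIntegral.abs_integral_le_integral_abs ht
        _ ≤ ∫ s in (0:ℝ)..t, lamStar * |u s - v s| := by
            apply intervalIntegral.integral_mono_on ht (hcu.sub hcv).abs
              ((continuous_const.mul habs_cont).intervalIntegrable 0 t)
            intro s hs
            rw [← mul_sub, abs_mul, abs_of_nonneg (hlam_bdd _ (by linarith [hs.2])).1]
            exact mul_le_mul_of_nonneg_right (hlam_bdd _ (by linarith [hs.2])).2 (abs_nonneg _)
        _ = lamStar * W := intervalIntegral.integral_const_mul _ _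
    have heq : u t - v t = (Au - Av) * Bu + Av * (Bu - Bv) := by
      rw [h1, h2]; ring
    calc |u t - v t| = |(Au - Av) * Bu + Av * (Bu - Bv)| := by rw [heq]
      _ ≤ |(Au - Av) * Bu| + |Av * (Bu - Bv)| := abs_add_le _ _
      _ = |Au - Av| * |Bu| + |Av| * |Bu - Bv| := by rw [abs_mul, abs_mul]
      _ ≤ W * lamStar + 1 * (lamStar * W) := by
          have hb : |Bu| ≤ lamStar := by rw [abs_of_nonneg hBu0]; exact hBulam
          have ha : |Av| ≤ 1 := by rw [abs_of_nonneg hAv0]; exact hAv1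
          have t1 : |Au - Av| * |Bu| ≤ W * lamStar :=
            mul_le_mul hAdiff hb (abs_nonneg _) hWnn
          have t2 : |Av| * |Bu - Bv| ≤ 1 * (lamStar * W) :=
            mul_le_mul ha hBdiff (abs_nonneg _) one_pos.le
          linarith
      _ = 2 * lamStar * W := by ring
  -- Gronwall
  intro t ht
  have hderiv : ∀ x : ℝ, HasDerivAt (fun r => ∫ s in (0:ℝ)..r, |u s - v s|)
      (|u x - v x|) x := fun x =>
    intervalIntegral.integral_hasDerivAt_right (habs_cont.intervalIntegrable 0 x)
      (habs_cont.stronglyMeasurableAtFilter _ _) habs_cont.continuousAt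
  have hWnn : ∀ x : ℝ, 0 ≤ x → 0 ≤ ∫ s in (0:ℝ)..x, |u s - v s| := fun x hx =>
    intervalIntegral.integral_nonneg hx fun s _ => abs_nonneg _
  have hb := norm_le_gronwallBound_of_norm_deriv_right_le
    (f := fun r => ∫ s in (0:ℝ)..r, |u s - v s|) (f' := fun x => |u x - v x|)
    (δ := 0) (K := 2 * lamStar) (ε := 0) (a := 0) (b := t)
    (fun x _ => (hderiv x).continuousAt.continuousWithinAt)
    (fun x _ => (hderiv x).hasDerivWithinAt)
    (by simp)
    (fun x hx => by
      have hm := main x hx.1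
      rw [Real.norm_eq_abs, Real.norm_eq_abs, abs_abs, abs_of_nonneg (hWnn x hx.1)]
      linarith)
  have hW0 : (∫ s in (0:ℝ)..t, |u s - v s|) ≤ 0 := by
    have := hb t ⟨ht, le_refl t⟩
    rwa [gronwallBound_ε0_δ0, Real.norm_eq_abs, abs_of_nonneg (hWnn t ht)] at this
  have hWt : (∫ s in (0:ℝ)..t, |u s - v s|) = 0 := le_antisymm hW0 (hWnn t ht)
  have := main t ht
  rw [hWt] at this
  have habs0 : |u t - v t| ≤ 0 := by linarith
  have := abs_nonneg (u t - v t)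
  have : |u t - v t| = 0 := le_antisymm habs0 this
  linarith [abs_eq_zero.1 this, sub_eq_zero.1 (abs_eq_zero.1 this)]
end

section
/- Let {g_N} be a sequence of nondecreasing right-continuous functions from ℝ≥0 to ℝ≥0 with g_N(0) ≥ 0, converging locally uniformly to a continuous nondecreasing function g. Let f : ℝ≥0 → ℝ be bounded, measurable, and such that its set of discontinuity points has Lebesgue–Stieltjes g-measure zero. Then for every T > 0, ∫_{[0,T]} f dg_N → ∫_{[0,T]} f dg as N → ∞, where the integrals are Lebesgue–Stieltjes integrals. -/
/-!
Quantile (Skorokhod) representation. For a Stieltjes function `h` vanishing on `(-∞, 0)` let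
`h.quantile u = inf {x | u ≤ h x}`; then `h.quantile` pushes Lebesgue measure on `(0, h T]`
forward to `dh` on `[0, T]`, so `∫_{[0,T]} f dh = ∫_{(0, h T]} f (h.quantile u) du`.
Pointwise convergence `g_N → g` makes `g_N.quantile u → g.quantile u` at every level `u` that
is not a value of `g` at a rational point, hence for almost every `u`. The discontinuity set of
`f` is `dg`-null, so its preimage under `g.quantile` is Lebesgue-null; thus the integrands
converge almost everywhere and dominated convergence applies.
-/

open MeasureTheory Filter Set Topology

namespace StieltjesFunction

/-- The generalized inverse of `h`. It is meaningful only for levels `0 < u ≤ h T`: elsewhere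
the set is empty or unbounded below and `sInf` returns the junk value `0`. -/
noncomputable def quantile (h : StieltjesFunction ℝ) (u : ℝ) : ℝ := sInf {x | u ≤ h x}

section Quantile

variable (h : StieltjesFunction ℝ) (h0 : ∀ x < 0, h x = 0)
include h0

theorem bddBelow_setOf_le_apply {u : ℝ} (hu : 0 < u) : BddBelow {x | u ≤ h x} := by
  refine ⟨0, fun x hx => not_lt.1 fun hx0 => ?_⟩
  simp only [mem_ofPred_eq, h0 x hx0] at hx
  linarith

theorem quantile_le_iff {u x T : ℝ} (hu : 0 < u) (huT : u ≤ h T) :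
    h.quantile u ≤ x ↔ u ≤ h x := by
  refine ⟨fun hle => ?_, fun hx => csInf_le (h.bddBelow_setOf_le_apply h0 hu) hx⟩
  have above : ∀ y > x, u ≤ h y := fun y hy => by
    obtain ⟨s, hs, hsy⟩ := exists_lt_of_csInf_lt ⟨T, huT⟩ (hle.trans_lt hy)
    exact hs.trans (h.mono hsy.le)
  exact ge_of_tendsto ((h.right_continuous x).mono Ioi_subset_Ici_self)
    (eventually_nhdsWithin_of_forall above)

theorem monotoneOn_quantile (T : ℝ) : MonotoneOn h.quantile (Ioc 0 (h T)) :=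
  fun _ hu _ hv huv => csInf_le_csInf (h.bddBelow_setOf_le_apply h0 hu.1) ⟨T, hv.2⟩
    fun _ hx => huv.trans hx

theorem aemeasurable_quantile (T : ℝ) :
    AEMeasurable h.quantile (volume.restrict (Ioc 0 (h T))) :=
  aemeasurable_restrict_of_monotoneOn measurableSet_Ioc (h.monotoneOn_quantile h0 T)

theorem preimage_quantile_Iic_inter (x T : ℝ) :
    h.quantile ⁻¹' Iic x ∩ Ioc 0 (h T) = Ioc 0 (min (h x) (h T)) := by
  ext u
  simp only [mem_inter_iff, mem_preimage, mem_Iic, mem_Ioc, le_min_iff]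
  exact ⟨fun ⟨hux, hu0, huT⟩ => ⟨hu0, (h.quantile_le_iff h0 hu0 huT).1 hux, huT⟩,
    fun ⟨hu0, hux, huT⟩ => ⟨(h.quantile_le_iff h0 hu0 huT).2 hux, hu0, huT⟩⟩

theorem tendsto_atBot_zero : Tendsto h atBot (𝓝 0) :=
  tendsto_const_nhds.congr' <| (eventually_lt_atBot 0).mono fun x hx => (h0 x hx).symm

theorem measure_Iio_zero : h.measure (Iio 0) = 0 := by
  have : Tendsto h (𝓝[<] 0) (𝓝 0) :=
    tendsto_const_nhds.congr' <| eventually_nhdsWithin_of_forall fun x hx => (h0 x hx).symm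
  rw [h.measure_Iio (h.tendsto_atBot_zero h0), leftLim_eq_of_tendsto this, sub_zero,
    ENNReal.ofReal_zero]

theorem map_quantile (T : ℝ) :
    (volume.restrict (Ioc 0 (h T))).map h.quantile = h.measure.restrict (Icc 0 T) := by
  have hIcc : h.measure.restrict (Icc 0 T) = h.measure.restrict (Iic T) := by
    rw [show Icc 0 T = Iic T \ Iio 0 by ext; simp [and_comm]]
    exact Measure.restrict_congr_set <| sdiff_ae_eq_self.2 <|
      measure_mono_null inter_subset_right (h.measure_Iio_zero h0)
  have : IsFiniteMeasure (volume.restrict (Ioc (0 : ℝ) (h T))) :=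
    isFiniteMeasure_restrict.2 measure_Ioc_lt_top.ne
  refine Measure.ext_of_Iic _ _ fun x => ?_
  rw [Measure.map_apply_of_aemeasurable (h.aemeasurable_quantile h0 T) measurableSet_Iic,
    Measure.restrict_apply' measurableSet_Ioc, h.preimage_quantile_Iic_inter h0, hIcc,
    Measure.restrict_apply' measurableSet_Iic, Iic_inter_Iic, Real.volume_Ioc,
    h.measure_Iic (h.tendsto_atBot_zero h0), sub_zero, sub_zero, h.mono.map_min]

theorem setIntegral_Icc_eq_setIntegral_quantile {f : ℝ → ℝ} (hf : Measurable f) (T : ℝ) :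
    ∫ x in Icc 0 T, f x ∂h.measure = ∫ u in Ioc 0 (h T), f (h.quantile u) := by
  rw [← h.map_quantile h0, integral_map (h.aemeasurable_quantile h0 T) hf.aestronglyMeasurable]

theorem ae_restrict_quantile_notMem {s : Set ℝ} (hs : h.measure s = 0) (T : ℝ) :
    ∀ᵐ u ∂volume.restrict (Ioc 0 (h T)), h.quantile u ∉ s := by
  refine ae_of_ae_map (p := (· ∉ s)) (h.aemeasurable_quantile h0 T) ?_
  rw [h.map_quantile h0]
  exact ae_restrict_of_ae (measure_eq_zero_iff_ae_notMem.1 hs)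

/-- A flat stretch of `h` at level `u` right of the quantile would contain a rational point. -/
theorem lt_apply_of_quantile_lt {u T x : ℝ} (hu : 0 < u) (huT : u ≤ h T)
    (hgap : ∀ q : ℚ, h q ≠ u) (hx : h.quantile u < x) : u < h x := by
  obtain ⟨q, hq, hqx⟩ := exists_rat_btwn hx
  exact (((h.quantile_le_iff h0 hu huT).1 hq.le).lt_of_ne (hgap q).symm).trans_le (h.mono hqx.le)

end Quantile

section Convergence

variable {ι : Type*} {l : Filter ι} {gN : ι → StieltjesFunction ℝ} {g : StieltjesFunction ℝ}
  (hgN0 : ∀ i, ∀ x < 0, gN i x = 0) (hg0 : ∀ x < 0, g x = 0)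
  (hlim : ∀ x, Tendsto (fun i => gN i x) l (𝓝 (g x)))
include hgN0 hg0 hlim

theorem tendsto_quantile {u : ℝ} (hu : 0 < u) (hcross : ∀ x, g.quantile u < x → u < g x) :
    Tendsto (fun i => (gN i).quantile u) l (𝓝 (g.quantile u)) := by
  have above : ∀ x, g.quantile u < x → ∀ᶠ i in l, u < gN i x := fun x hx =>
    (hlim x).eventually (eventually_gt_nhds (hcross x hx))
  refine tendsto_order.2 ⟨fun a ha => ?_, fun b hb => ?_⟩
  · have hga : g a < u := not_le.1 fun hle =>
      (csInf_le (g.bddBelow_setOf_le_apply hg0 hu) hle).not_gt ha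
    filter_upwards [(hlim a).eventually (eventually_lt_nhds hga),
      above _ (lt_add_one (g.quantile u))] with i hia hiT
    exact not_le.1 fun hle => (((gN i).quantile_le_iff (hgN0 i) hu hiT.le).1 hle).not_gt hia
  · obtain ⟨x, hx, hxb⟩ := exists_between hb
    filter_upwards [above x hx] with i hi
    exact (csInf_le ((gN i).bddBelow_setOf_le_apply (hgN0 i) hu) hi.le).trans_lt hxb

theorem ae_tendsto_indicator_comp_quantile {f : ℝ → ℝ}
    (hf : g.measure {x | ¬ContinuousAt f x} = 0) (T : ℝ) :
    ∀ᵐ u, Tendsto (fun i => (Ioc 0 (gN i T)).indicator (f ∘ (gN i).quantile) u) l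
      (𝓝 ((Ioc 0 (g T)).indicator (f ∘ g.quantile) u)) := by
  have hgap : ∀ᵐ u : ℝ, ∀ q : ℚ, g q ≠ u := by
    filter_upwards [measure_eq_zero_iff_ae_notMem.1
      ((countable_range fun q : ℚ => g q).measure_zero volume)] with u hu q hq
    exact hu ⟨q, hq⟩
  have hcont : ∀ᵐ u : ℝ, u ∈ Ioc 0 (g T) → ContinuousAt f (g.quantile u) :=
    (ae_restrict_iff' measurableSet_Ioc).1 <|
      (g.ae_restrict_quantile_notMem hg0 hf T).mono fun _ hu => not_not.1 hu
  have hT : ∀ᵐ u : ℝ, u ≠ g T := measure_eq_zero_iff_ae_notMem.1 Real.volume_singleton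
  filter_upwards [hgap, hT, hcont] with u hgap hT hcont
  by_cases hu : u ∈ Ioc 0 (g T)
  · have hmem : ∀ᶠ i in l, u ∈ Ioc 0 (gN i T) :=
      ((hlim T).eventually (eventually_gt_nhds (hu.2.lt_of_ne hT))).mono fun _ hi => ⟨hu.1, hi.le⟩
    rw [indicator_of_mem hu]
    refine ((hcont hu).tendsto.comp (tendsto_quantile hgN0 hg0 hlim hu.1
      fun x hx => g.lt_apply_of_quantile_lt hg0 hu.1 hu.2 hgap hx)).congr' ?_
    filter_upwards [hmem] with i hi
    rw [indicator_of_mem hi]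
    rfl
  · have hnotMem : ∀ᶠ i in l, u ∉ Ioc 0 (gN i T) := by
      rw [mem_Ioc, not_and_or, not_lt, not_le] at hu
      rcases hu with hu | hu
      · exact Eventually.of_forall fun _ hi => hu.not_gt hi.1
      · exact ((hlim T).eventually (eventually_lt_nhds hu)).mono fun _ hi hu' => hu'.2.not_gt hi
    rw [indicator_of_notMem hu]
    refine tendsto_const_nhds.congr' ?_
    filter_upwards [hnotMem] with i hi
    rw [indicator_of_notMem hi]

theorem tendsto_setIntegral_Icc [l.IsCountablyGenerated] {f : ℝ → ℝ} (hf : Measurable f)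
    {C : ℝ} (hfC : ∀ x, |f x| ≤ C) (hf_disc : g.measure {x | ¬ContinuousAt f x} = 0) (T : ℝ) :
    Tendsto (fun i => ∫ x in Icc 0 T, f x ∂(gN i).measure) l
      (𝓝 (∫ x in Icc 0 T, f x ∂g.measure)) := by
  have key : ∀ h : StieltjesFunction ℝ, (∀ x < 0, h x = 0) →
      ∫ x in Icc 0 T, f x ∂h.measure = ∫ u, (Ioc 0 (h T)).indicator (f ∘ h.quantile) u :=
    fun h h0 => by
      rw [h.setIntegral_Icc_eq_setIntegral_quantile h0 hf, integral_indicator measurableSet_Ioc]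
      rfl
  simp only [key _ (hgN0 _), key g hg0]
  refine tendsto_integral_filter_of_dominated_convergence
    ((Ioc 0 (g T + 1)).indicator fun _ => C) (Eventually.of_forall fun i => ?_) ?_ ?_
    (ae_tendsto_indicator_comp_quantile hgN0 hg0 hlim hf_disc T)
  · exact (aestronglyMeasurable_indicator_iff measurableSet_Ioc).2
      (hf.comp_aemeasurable ((gN i).aemeasurable_quantile (hgN0 i) T)).aestronglyMeasurable
  · filter_upwards [(hlim T).eventually (eventually_lt_nhds (lt_add_one (g T)))] with i hi
    refine ae_of_all _ fun u => ?_
    rw [norm_indicator_eq_indicator_norm]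
    exact (indicator_le_indicator (hfC _)).trans <| indicator_le_indicator_of_subset
      (Ioc_subset_Ioc_right hi.le) (fun _ => (abs_nonneg _).trans (hfC 0)) u
  · exact (integrable_indicator_iff measurableSet_Ioc).2 (integrableOn_const measure_Ioc_lt_top.ne)

end Convergence

end StieltjesFunction

theorem stieltjes_portmanteau_general
    (gN : ℕ → StieltjesFunction ℝ) (g : StieltjesFunction ℝ)
    (hgN_neg : ∀ N x, x < 0 → gN N x = 0)
    (hg_neg : ∀ x, x < 0 → g x = 0)
    (hconv : TendstoLocallyUniformlyOn (fun N x => gN N x) (fun x => g x)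
      atTop (Set.Ici 0))
    (f : ℝ → ℝ) (hf_meas : Measurable f) (C : ℝ) (hf_bdd : ∀ x, |f x| ≤ C)
    (hf_disc : g.measure {x | ¬ ContinuousAt f x} = 0) :
    ∀ T, 0 < T →
      Tendsto (fun N => ∫ x in Set.Icc (0:ℝ) T, f x ∂(gN N).measure) atTop
        (nhds (∫ x in Set.Icc (0:ℝ) T, f x ∂g.measure)) := by
  have hlim : ∀ x, Tendsto (fun N => gN N x) atTop (𝓝 (g x)) := fun x => by
    rcases lt_or_ge x 0 with hx | hx
    · simpa only [hgN_neg _ x hx, hg_neg x hx] using tendsto_const_nhds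
    · exact hconv.tendsto_at hx
  exact fun T _ =>
    StieltjesFunction.tendsto_setIntegral_Icc hgN_neg hg_neg hlim hf_meas hf_bdd hf_disc T

/-- Portmanteau-type lemma (Lemma 5.2 of the paper): if the nondecreasing right-continuous
    gN converge locally uniformly on ℝ≥0 to a continuous nondecreasing g (all vanishing on
    negatives), and f is bounded measurable with discontinuity set of g-measure zero, then
    ∫_{[0,T]} f dgN → ∫_{[0,T]} f dg. -/
theorem stieltjes_portmanteau
    (gN : ℕ → StieltjesFunction ℝ) (g : StieltjesFunction ℝ)
    (hgN_nonneg : ∀ N x, 0 ≤ gN N x)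
    (hgN_neg : ∀ N x, x < 0 → gN N x = 0)
    (hg_cont : Continuous g) (hg_neg : ∀ x, x < 0 → g x = 0)
    (hconv : TendstoLocallyUniformlyOn (fun N x => gN N x) (fun x => g x)
      atTop (Set.Ici 0))
    (f : ℝ → ℝ) (hf_meas : Measurable f) (C : ℝ) (hf_bdd : ∀ x, |f x| ≤ C)
    (hf_disc : g.measure {x | ¬ ContinuousAt f x} = 0) :
    ∀ T, 0 < T →
      Tendsto (fun N => ∫ x in Set.Icc (0:ℝ) T, f x ∂(gN N).measure) atTop
        (nhds (∫ x in Set.Icc (0:ℝ) T, f x ∂g.measure)) :=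
  stieltjes_portmanteau_general gN g hgN_neg hg_neg hconv f hf_meas C hf_bdd hf_disc
end

section
/- Let Fᶜ : ℝ → [0,1] be nonincreasing with Fᶜ = 1 on (−∞, 0) and right-continuous, and let Ā : ℝ≥0 → ℝ≥0 be continuous nondecreasing with Ā(0) = 0 and Ā(t) − Ā(s) ≤ λ*(t − s) for all 0 ≤ s ≤ t. Define 𝔍̄₁(t,x) := ∫_{(t−x)⁺}^{t} Fᶜ(t−s) dĀ(s). Then 𝔍̄₁ is jointly continuous in (t,x) on ℝ≥0 × ℝ≥0 whenever Fᶜ is continuous, and in general satisfies |𝔍̄₁(t',x') − 𝔍̄₁(t,x)| ≤ λ* ∫_{(t−x)⁺}^{t} |Fᶜ(t−s) − Fᶜ(t'−s)| ds + 2 λ* (|t−t'| + |x−x'|) for t ≤ t', |x − x'| ≤ |t'−t| + |x'−x|. -/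
/-!
A `λ*`-Lipschitz Stieltjes function `Ā` differs from `λ* s` by a nondecreasing function, so
`dĀ ≤ λ* · Lebesgue`. Writing `𝔍̄₁(t', x') - 𝔍̄₁(t, x)` as an integral of the change of integrand
over `((t - x)⁺, t]` plus integrals over the two gaps `((t - x)⁺, (t' - x')⁺]` and `(t, t']`
gives the estimate. Since `Fᶜ` is antitone, `∫ (Fᶜ(t - s) - Fᶜ(t' - s)) ds` telescopes to two
integrals over intervals of length `t' - t`, so it is at most `t' - t`; hence `𝔍̄₁` is Lipschitz,
and in particular continuous whether or not `Fᶜ` is.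
-/

open MeasureTheory intervalIntegral
open scoped NNReal

theorem StieltjesFunction.measure_le_smul_volume (f : StieltjesFunction ℝ) (K : ℝ≥0)
    (hf : ∀ s t, s ≤ t → f t - f s ≤ K * (t - s)) : f.measure ≤ K • volume := by
  let g : StieltjesFunction ℝ :=
    { toFun := fun x ↦ K * x - f x
      mono' := fun s t hst ↦ by linarith [hf s t hst]
      right_continuous' := fun x ↦
        ((continuous_const_mul (K : ℝ)).continuousWithinAt).sub (f.right_continuous x) }
  have hfg : f + g = K • StieltjesFunction.id := StieltjesFunction.ext fun x ↦ by
    change f x + (K * x - f x) = K * x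
    ring
  calc f.measure ≤ f.measure + g.measure := Measure.le_add_right le_rfl
    _ = K • volume := by
      rw [← StieltjesFunction.measure_add, hfg, StieltjesFunction.measure_smul,
        Real.volume_eq_stieltjes_id]

theorem sub_le_mul_sub_of_eq_zero_of_nonpos {A : ℝ → ℝ} {K : ℝ} (hK : 0 ≤ K)
    (hA_neg : ∀ x, x ≤ 0 → A x = 0)
    (hA_lip : ∀ s t, 0 ≤ s → s ≤ t → A t - A s ≤ K * (t - s)) {s t : ℝ}
    (hst : s ≤ t) : A t - A s ≤ K * (t - s) := by
  rcases le_total 0 s with hs | hs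
  · exact hA_lip s t hs hst
  rw [hA_neg s hs]
  rcases le_total t 0 with ht | ht
  · simpa [hA_neg t ht] using mul_nonneg hK (sub_nonneg.2 hst)
  · have h0t := hA_lip 0 t le_rfl ht
    rw [hA_neg 0 le_rfl] at h0t
    exact h0t.trans (by gcongr)

section ComparisonWithLebesgue

variable {E : Type*} [NormedAddCommGroup E] [NormedSpace ℝ E]
  {μ : Measure ℝ} {K : ℝ≥0} {h : ℝ → E} {a b C : ℝ}

theorem norm_intervalIntegral_le_of_le_smul_volume (hμ : μ ≤ K • volume) (hab : a ≤ b)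
    (hh : IntervalIntegrable h volume a b) :
    ‖∫ x in a..b, h x ∂μ‖ ≤ K * ∫ x in a..b, ‖h x‖ := by
  have hKvol : ∫ x in a..b, ‖h x‖ ∂μ ≤ ∫ x in a..b, ‖h x‖ ∂(K • volume) := by
    rw [integral_of_le hab, integral_of_le hab]
    refine integral_mono_measure (Measure.restrict_mono subset_rfl hμ)
      (Filter.Eventually.of_forall fun _ ↦ norm_nonneg _) ?_
    rw [Measure.restrict_smul, ← Measure.coe_nnreal_smul]
    exact hh.1.norm.smul_measure ENNReal.coe_ne_top
  calc ‖∫ x in a..b, h x ∂μ‖ ≤ ∫ x in a..b, ‖h x‖ ∂μ :=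
        norm_integral_le_integral_norm hab
    _ ≤ ∫ x in a..b, ‖h x‖ ∂(K • volume) := hKvol
    _ = K * ∫ x in a..b, ‖h x‖ := by
      rw [← Measure.coe_nnreal_smul, intervalIntegral.integral_smul_measure]
      simp

theorem norm_intervalIntegral_le_of_norm_le_of_le_smul_volume (hμ : μ ≤ K • volume)
    (hh : IntervalIntegrable h volume a b) (hC : ∀ x, ‖h x‖ ≤ C) :
    ‖∫ x in a..b, h x ∂μ‖ ≤ K * (C * |b - a|) := by
  wlog hab : a ≤ b generalizing a b
  · rw [integral_symm, norm_neg, abs_sub_comm]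
    exact this hh.symm (le_of_not_ge hab)
  refine (norm_intervalIntegral_le_of_le_smul_volume hμ hab hh).trans ?_
  gcongr
  simpa [abs_of_nonneg (sub_nonneg.2 hab), mul_comm] using (le_abs_self _).trans <|
    norm_integral_le_of_norm_le_const (a := a) (b := b) (f := fun x ↦ ‖h x‖) (C := C)
      fun x _ ↦ (norm_norm (h x)).trans_le (hC x)

end ComparisonWithLebesgue

theorem Antitone.intervalIntegral_abs_sub_comp_sub_le {f : ℝ → ℝ} (hf : Antitone f)
    {a b c c' : ℝ} (hcc' : c ≤ c') :
    ∫ s in a..b, |f (c - s) - f (c' - s)| ≤ (c' - c) * (f (c - b) - f (c' - a)) := by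
  have hint : ∀ u v, IntervalIntegrable f volume u v := fun _ _ ↦ hf.intervalIntegrable
  have hint_comp : ∀ d, IntervalIntegrable (fun s ↦ f (d - s)) volume a b := fun d ↦
    (show Monotone fun s ↦ f (d - s) from fun _ _ hst ↦ hf (by linarith)).intervalIntegrable
  have hupper : ∫ y in c - b..c' - b, f y ≤ (c' - c) * f (c - b) := by
    calc ∫ y in c - b..c' - b, f y ≤ ∫ _ in c - b..c' - b, f (c - b) :=
          integral_mono_on (by linarith) (hint _ _) intervalIntegrable_const
            fun y hy ↦ hf hy.1
      _ = (c' - c) * f (c - b) := by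
          simp only [intervalIntegral.integral_const, smul_eq_mul]; ring_nf
  have hlower : (c' - c) * f (c' - a) ≤ ∫ y in c - a..c' - a, f y := by
    calc (c' - c) * f (c' - a) = ∫ _ in c - a..c' - a, f (c' - a) := by
          simp only [intervalIntegral.integral_const, smul_eq_mul]; ring_nf
      _ ≤ ∫ y in c - a..c' - a, f y :=
          integral_mono_on (by linarith) intervalIntegrable_const (hint _ _)
            fun y hy ↦ hf hy.2
  have hshift : ∫ s in a..b, (f (c - s) - f (c' - s))
      = (∫ y in c - b..c' - b, f y) - ∫ y in c - a..c' - a, f y := by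
    rw [integral_sub (hint_comp c) (hint_comp c'),
      integral_comp_sub_left, integral_comp_sub_left,
      integral_interval_sub_interval_comm (hint _ _) (hint _ _) (hint _ _)]
  calc ∫ s in a..b, |f (c - s) - f (c' - s)| = ∫ s in a..b, (f (c - s) - f (c' - s)) :=
        integral_congr fun s _ ↦ abs_of_nonneg (sub_nonneg.2 (hf (by linarith)))
    _ ≤ (c' - c) * (f (c - b) - f (c' - a)) := by rw [hshift]; linarith

/-- The paper's `𝔍̄₁(t, x)` is `windowIntegral Fᶜ dĀ t x`. -/
noncomputable def windowIntegral (f : ℝ → ℝ) (μ : Measure ℝ) (t x : ℝ) : ℝ :=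
  ∫ s in Set.Ioc (max (t - x) 0) t, f (t - s) ∂μ

section windowIntegral

variable {f : ℝ → ℝ} {μ : Measure ℝ} {K : ℝ≥0} {t t' x x' : ℝ}

theorem windowIntegral_eq_intervalIntegral (ht : 0 ≤ t) (hx : 0 ≤ x) :
    windowIntegral f μ t x = ∫ s in max (t - x) 0..t, f (t - s) ∂μ :=
  (integral_of_le (max_le (by linarith) ht)).symm

theorem abs_windowIntegral_sub_le (hμ : μ ≤ K • volume) (hf : Antitone f)
    (hf01 : ∀ y, f y ∈ Set.Icc 0 1) (ht : 0 ≤ t) (htt' : t ≤ t') (hx : 0 ≤ x)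
    (hx' : 0 ≤ x') :
    |windowIntegral f μ t' x' - windowIntegral f μ t x| ≤
      K * (∫ s in max (t - x) 0..t, |f (t - s) - f (t' - s)|)
        + 2 * K * (|t - t'| + |x - x'|) := by
  have : IsLocallyFiniteMeasure μ := Measure.isLocallyFiniteMeasure_of_le hμ
  set a := max (t - x) 0
  set a' := max (t' - x') 0
  set g := fun s ↦ f (t - s)
  set g' := fun s ↦ f (t' - s)
  have hg_mono : ∀ d, Monotone fun s ↦ f (d - s) := fun d _ _ hst ↦ hf (by linarith)
  have hg'_int :
      ∀ (ν : Measure ℝ) [IsLocallyFiniteMeasure ν] u v, IntervalIntegrable g' ν u v :=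
    fun _ _ _ _ ↦ (hg_mono t').intervalIntegrable
  have hg'_le : ∀ s, ‖g' s‖ ≤ 1 := fun s ↦ by
    have := hf01 (t' - s)
    rw [Real.norm_eq_abs, abs_le]
    exact ⟨by linarith [this.1], this.2⟩
  have hdecomp : (∫ s in a'..t', g' s ∂μ) - ∫ s in a..t, g s ∂μ
      = ((∫ s in t..t', g' s ∂μ) - ∫ s in a..a', g' s ∂μ)
        + ∫ s in a..t, (g' s - g s) ∂μ := by
    rw [integral_sub (hg'_int μ _ _) (hg_mono t).intervalIntegrable,
      integral_interval_sub_interval_comm' (hg'_int μ _ _) (hg'_int μ _ _) (hg'_int μ _ _)]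
    ring
  have hend : |∫ s in t..t', g' s ∂μ| ≤ K * |t - t'| := by
    simpa [abs_sub_comm] using
      norm_intervalIntegral_le_of_norm_le_of_le_smul_volume hμ (hg'_int volume t t') hg'_le
  have hstart : |∫ s in a..a', g' s ∂μ| ≤ K * (|t - t'| + |x - x'|) := by
    have ha : |a' - a| ≤ |t - t'| + |x - x'| := by
      calc |a' - a| ≤ |(t' - x') - (t - x)| := abs_max_sub_max_le_abs _ _ _
        _ = |(t' - t) - (x' - x)| := by ring_nf
        _ ≤ |t - t'| + |x - x'| := by
          rw [abs_sub_comm t, abs_sub_comm x]; exact abs_sub _ _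
    have hgap := norm_intervalIntegral_le_of_norm_le_of_le_smul_volume hμ
      (hg'_int volume a a') hg'_le
    rw [Real.norm_eq_abs, one_mul] at hgap
    exact hgap.trans (by gcongr)
  have hbulk :
      |∫ s in a..t, (g' s - g s) ∂μ| ≤ K * ∫ s in a..t, |f (t - s) - f (t' - s)| := by
    simpa [abs_sub_comm] using norm_intervalIntegral_le_of_le_smul_volume hμ
      (max_le (by linarith) ht) ((hg'_int volume a t).sub (hg_mono t).intervalIntegrable)
  rw [windowIntegral_eq_intervalIntegral (ht.trans htt') hx',
    windowIntegral_eq_intervalIntegral ht hx, hdecomp]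
  have hend' : (K : ℝ) * |t - t'| ≤ K * (|t - t'| + |x - x'|) := by
    gcongr; exact le_add_of_nonneg_right (abs_nonneg _)
  calc _ ≤ |∫ s in t..t', g' s ∂μ| + |∫ s in a..a', g' s ∂μ|
        + |∫ s in a..t, (g' s - g s) ∂μ| :=
        (abs_add_le _ _).trans (by gcongr; exact abs_sub _ _)
    _ ≤ _ := by linarith

theorem abs_windowIntegral_sub_le_three_mul (hμ : μ ≤ K • volume) (hf : Antitone f)
    (hf01 : ∀ y, f y ∈ Set.Icc 0 1) (ht : 0 ≤ t) (ht' : 0 ≤ t') (hx : 0 ≤ x)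
    (hx' : 0 ≤ x') :
    |windowIntegral f μ t' x' - windowIntegral f μ t x| ≤ 3 * K * (|t - t'| + |x - x'|) := by
  wlog htt' : t ≤ t' generalizing t t' x x'
  · rw [abs_sub_comm, abs_sub_comm t, abs_sub_comm x]
    exact this ht' ht hx' hx (le_of_not_ge htt')
  have hshift : ∫ s in max (t - x) 0..t, |f (t - s) - f (t' - s)| ≤ |t - t'| := by
    calc _ ≤ (t' - t) * (f (t - t) - f (t' - max (t - x) 0)) :=
          hf.intervalIntegral_abs_sub_comp_sub_le htt'
      _ ≤ (t' - t) * 1 := by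
          gcongr; linarith [(hf01 (t - t)).2, (hf01 (t' - max (t - x) 0)).1]
      _ = |t - t'| := by rw [mul_one, abs_sub_comm, abs_of_nonneg (by linarith)]
  have hK_shift : (K : ℝ) * (∫ s in max (t - x) 0..t, |f (t - s) - f (t' - s)|)
      ≤ K * (|t - t'| + |x - x'|) := by
    gcongr; exact hshift.trans (le_add_of_nonneg_right (abs_nonneg _))
  linarith [abs_windowIntegral_sub_le hμ hf hf01 ht htt' hx hx']

theorem continuousOn_windowIntegral (hμ : μ ≤ K • volume) (hf : Antitone f)
    (hf01 : ∀ y, f y ∈ Set.Icc 0 1) :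
    ContinuousOn (fun p : ℝ × ℝ ↦ windowIntegral f μ p.1 p.2) (Set.Ici 0 ×ˢ Set.Ici 0) := by
  refine (LipschitzOnWith.of_dist_le_mul fun p hp q hq ↦ ?_).continuousOn (K := 6 * K)
  have hdist : |q.1 - p.1| + |q.2 - p.2| ≤ 2 * dist p q := by
    rw [dist_comm, Prod.dist_eq, Real.dist_eq, Real.dist_eq]
    linarith [le_max_left |q.1 - p.1| |q.2 - p.2|, le_max_right |q.1 - p.1| |q.2 - p.2|]
  rw [Real.dist_eq]
  calc _ ≤ 3 * K * (|q.1 - p.1| + |q.2 - p.2|) :=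
        abs_windowIntegral_sub_le_three_mul hμ hf hf01 hq.1 hp.1 hq.2 hp.2
    _ ≤ 3 * K * (2 * dist p q) := by gcongr
    _ = _ := by push_cast; ring

end windowIntegral

theorem limit_J1_continuity_estimate_general
    (Fc : ℝ → ℝ) (hFc_anti : Antitone Fc) (hFc_bdd : ∀ x, Fc x ∈ Set.Icc (0:ℝ) 1)
    (lamStar : ℝ) (hlamStar : 0 < lamStar)
    (A : StieltjesFunction ℝ)
    (hA_neg : ∀ x, x ≤ 0 → A x = 0)
    (hA_lip : ∀ s t, 0 ≤ s → s ≤ t → A t - A s ≤ lamStar * (t - s))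
    (J1 : ℝ → ℝ → ℝ)
    (hJ1 : ∀ t x, J1 t x = ∫ s in Set.Ioc (max (t - x) 0) t, Fc (t - s) ∂A.measure) :
    (Continuous Fc →
      ContinuousOn (fun p : ℝ × ℝ => J1 p.1 p.2) (Set.Ici 0 ×ˢ Set.Ici 0)) ∧
    (∀ t t' x x', 0 ≤ t → t ≤ t' → 0 ≤ x → 0 ≤ x' →
      |J1 t' x' - J1 t x| ≤
        lamStar * (∫ s in (max (t - x) 0)..t, |Fc (t - s) - Fc (t' - s)|)
          + 2 * lamStar * (|t - t'| + |x - x'|)) := by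
  let K : ℝ≥0 := ⟨lamStar, hlamStar.le⟩
  have hμ : A.measure ≤ K • volume := A.measure_le_smul_volume K fun _ _ hst ↦
    sub_le_mul_sub_of_eq_zero_of_nonpos hlamStar.le hA_neg hA_lip hst
  obtain rfl : J1 = windowIntegral Fc A.measure := funext₂ hJ1
  exact ⟨fun _ ↦ continuousOn_windowIntegral hμ hFc_anti hFc_bdd,
    fun _ _ _ _ ht htt' hx hx' ↦ abs_windowIntegral_sub_le hμ hFc_anti hFc_bdd ht htt' hx hx'⟩

/-- Joint continuity and modulus-of-continuity estimate for
    𝔍̄₁(t,x) = ∫_{(t−x)⁺}^t Fᶜ(t−s) dĀ(s), where Ā is λ*-Lipschitz nondecreasing. -/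
theorem limit_J1_continuity_estimate
    (Fc : ℝ → ℝ) (hFc_anti : Antitone Fc) (hFc_bdd : ∀ x, Fc x ∈ Set.Icc (0:ℝ) 1)
    (hFc_neg : ∀ x, x < 0 → Fc x = 1)
    (hFc_right : ∀ x, ContinuousWithinAt Fc (Set.Ici x) x)
    (lamStar : ℝ) (hlamStar : 0 < lamStar)
    (A : StieltjesFunction ℝ) (hA_cont : Continuous A)
    (hA_neg : ∀ x, x ≤ 0 → A x = 0)
    (hA_lip : ∀ s t, 0 ≤ s → s ≤ t → A t - A s ≤ lamStar * (t - s))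
    (J1 : ℝ → ℝ → ℝ)
    (hJ1 : ∀ t x, J1 t x = ∫ s in Set.Ioc (max (t - x) 0) t, Fc (t - s) ∂A.measure) :
    (Continuous Fc →
      ContinuousOn (fun p : ℝ × ℝ => J1 p.1 p.2) (Set.Ici 0 ×ˢ Set.Ici 0)) ∧
    (∀ t t' x x', 0 ≤ t → t ≤ t' → 0 ≤ x → 0 ≤ x' →
      |J1 t' x' - J1 t x| ≤
        lamStar * (∫ s in (max (t - x) 0)..t, |Fc (t - s) - Fc (t' - s)|)
          + 2 * lamStar * (|t - t'| + |x - x'|)) :=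
  limit_J1_continuity_estimate_general Fc hFc_anti hFc_bdd lamStar hlamStar A hA_neg hA_lip J1 hJ1
end

section
/- Fix t_i > 0 and let F(x) = 1_{x ≥ t_i} (deterministic infectious period of length t_i), so Gᶜ(x) := 1 − F(x⁻) = 1_{x ≤ t_i}. Let ī₀ : [0, t_i] → ℝ≥0 and b : ℝ≥0 → ℝ≥0 be continuous. Define ī(t,x) := ī₀(x−t) for t ≤ x < t_i, ī(t,x) := b(t−x) for x < min(t, t_i), and ī(t,x) := 0 for x ≥ t_i. Then for every bounded C¹ test function φ with compact support in (0,∞)², ī satisfies in the distributional sense ∂ī/∂t + ∂ī/∂x = −δ_{t_i}(x) ī(t,x), where δ_{t_i} is the Dirac mass at t_i; i.e., the distribution (∂_t + ∂_x) ī equals the measure −ī(t, t_i⁻) dt ⊗ δ_{t_i}(dx). -/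
/-!
Along each characteristic `t - x = s` the density is the constant `g s`, where `g s = ī₀(-s)`
for `s ≤ 0` and `g s = b s` for `s > 0`. The shear `(s, x) ↦ (s + x, x)` turns `∂_t + ∂_x` into
`d/dx`, so after Fubini the fundamental theorem of calculus on `x < tᵢ` leaves only the boundary
value at age `tᵢ`, namely `∫ g(s) φ(s + tᵢ, tᵢ) ds`; the truncation at `tᵢ` is where the Dirac
mass comes from. Only local integrability of `g` enters, so its jump at `0` is harmless.
-/

open MeasureTheory Set

theorem MeasureTheory.LocallyIntegrable.comp_fst {α β E : Type*} [TopologicalSpace α]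
    [MeasurableSpace α] [TopologicalSpace β] [MeasurableSpace β] [NormedAddCommGroup E]
    {μ : Measure α} {ν : Measure β} [SFinite μ] [SFinite ν] [IsLocallyFiniteMeasure ν] {f : α → E}
    (hf : LocallyIntegrable f μ) : LocallyIntegrable (fun p : α × β => f p.1) (μ.prod ν) := by
  rintro ⟨a, b⟩
  obtain ⟨U, hU, hfU⟩ := hf a
  obtain ⟨V, hV, hνV⟩ := ν.finiteAt_nhds b
  have : IsFiniteMeasure (ν.restrict V) := isFiniteMeasure_restrict.mpr hνV.ne
  refine ⟨U ×ˢ V, prod_mem_nhds hU hV, ?_⟩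
  rw [IntegrableOn, ← Measure.prod_restrict]
  exact hfU.comp_fst _

theorem MeasureTheory.LocallyIntegrable.piecewise {X E : Type*} [TopologicalSpace X]
    [MeasurableSpace X] [NormedAddCommGroup E] {μ : Measure X} {f g : X → E} {s : Set X}
    [DecidablePred (· ∈ s)] (hs : MeasurableSet s) (hf : LocallyIntegrable f μ)
    (hg : LocallyIntegrable g μ) : LocallyIntegrable (s.piecewise f g) μ := by
  have : s.piecewise f g = s.indicator f + sᶜ.indicator g := by
    ext x; by_cases hx : x ∈ s <;> simp [hx]
  rw [this]
  exact (hf.indicator hs).add (hg.indicator hs.compl)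

theorem HasCompactSupport.integral_Iic_fderiv_one_one_eq {ψ : ℝ × ℝ → ℝ} (hψ : ContDiff ℝ 1 ψ)
    (hψc : HasCompactSupport ψ) (s c : ℝ) :
    ∫ x in Iic c, fderiv ℝ ψ (s + x, x) (1, 1) = ψ (s + c, c) := by
  have hline : ∀ x : ℝ, HasDerivAt (fun y : ℝ => (s + y, y)) (1, 1) x := fun x =>
    ((hasDerivAt_id x).const_add s).prodMk (hasDerivAt_id x)
  have hderiv : ∀ x, deriv (fun y => ψ (s + y, y)) x = fderiv ℝ ψ (s + x, x) (1, 1) := fun x =>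
    ((hψ.differentiable one_ne_zero _).hasFDerivAt.comp_hasDerivAt x (hline x)).deriv
  have hsupp : HasCompactSupport fun y => ψ (s + y, y) :=
    .intro (hψc.image continuous_snd) fun x hx =>
      image_eq_zero_of_notMem_tsupport fun h => hx ⟨_, h, rfl⟩
  have hcont : ContDiff ℝ 1 fun y => ψ (s + y, y) :=
    hψ.comp ((contDiff_const.add contDiff_id).prodMk contDiff_id)
  simp_rw [← hderiv]
  exact hsupp.integral_Iic_deriv_eq hcont c

theorem setIntegral_snd_lt_mul_fderiv_one_one {g : ℝ → ℝ} (hg : LocallyIntegrable g)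
    {ψ : ℝ × ℝ → ℝ} (hψ : ContDiff ℝ 1 ψ) (hψc : HasCompactSupport ψ) (c : ℝ) :
    ∫ p in {p : ℝ × ℝ | p.2 < c}, g (p.1 - p.2) * fderiv ℝ ψ p (1, 1)
      = ∫ s, g s * ψ (s + c, c) := by
  set ν := (volume : Measure ℝ).restrict (Iio c)
  set H : ℝ × ℝ → ℝ := fun q => g q.1 * fderiv ℝ ψ (q.1 + q.2, q.2) (1, 1)
  have hD : Continuous fun p => fderiv ℝ ψ p (1, 1) :=
    (hψ.continuous_fderiv one_ne_zero).clm_apply continuous_const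
  have hDc : HasCompactSupport fun q : ℝ × ℝ => fderiv ℝ ψ (q.1 + q.2, q.2) (1, 1) := by
    refine .intro ((hψc.fderiv_apply (𝕜 := ℝ) (1, 1)).image
      (f := fun p : ℝ × ℝ => (p.1 - p.2, p.2)) (by fun_prop)) fun q hq => ?_
    exact image_eq_zero_of_notMem_tsupport (f := fun p => fderiv ℝ ψ p (1, 1))
      (x := (q.1 + q.2, q.2)) fun h => hq ⟨_, h, by simp⟩
  have hH : Integrable H (volume.prod volume) :=
    hg.comp_fst.integrable_smul_right_of_hasCompactSupport (hD.comp (by fun_prop)) hDc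
  have hHν : Integrable H (volume.prod ν) := by
    have := hH.restrict (s := univ ×ˢ Iio c)
    rwa [← Measure.prod_restrict, Measure.restrict_univ] at this
  have hset : {p : ℝ × ℝ | p.2 < c} = univ ×ˢ Iio c := by ext; simp
  have hsub : MeasurePreserving (fun p : ℝ × ℝ => (p.1 - p.2, p.2))
      (volume.prod ν) (volume.prod ν) :=
    measurePreserving_sub_prod volume ν
  calc ∫ p in {p : ℝ × ℝ | p.2 < c}, g (p.1 - p.2) * fderiv ℝ ψ p (1, 1)
      = ∫ p, H (p.1 - p.2, p.2) ∂(volume.prod ν) := by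
        rw [hset, Measure.volume_eq_prod, ← Measure.prod_restrict, Measure.restrict_univ]
        simp [H, ν]
    _ = ∫ q, H q ∂(volume.prod ν) := by
        have hHmap : AEStronglyMeasurable H ((volume.prod ν).map fun p => (p.1 - p.2, p.2)) := by
          rw [hsub.map_eq]; exact hHν.1
        rw [← integral_map hsub.measurable.aemeasurable hHmap, hsub.map_eq]
    _ = ∫ s, ∫ x in Iio c, H (s, x) := integral_prod H hHν
    _ = ∫ s, g s * ψ (s + c, c) := by
        congr 1 with s
        simp only [H]
        rw [integral_const_mul, ← integral_Iic_eq_integral_Iio,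
          hψc.integral_Iic_fderiv_one_one_eq hψ]

theorem deterministic_period_PDE_distributional_general
    (ti : ℝ)
    (i0 b : ℝ → ℝ) (hi0_cont : Continuous i0)
    (hb_cont : Continuous b)
    (ii : ℝ → ℝ → ℝ)
    (hii : ∀ t x, ii t x =
      if ti ≤ x then 0 else if t ≤ x then i0 (x - t) else b (t - x))
    (ilim : ℝ → ℝ)
    (hilim : ∀ t, ilim t = if t ≤ ti then i0 (ti - t) else b (t - ti)) :
    ∀ φ : ℝ × ℝ → ℝ, ContDiff ℝ 1 φ → HasCompactSupport φ →
      tsupport φ ⊆ Set.Ioi 0 ×ˢ Set.Ioi 0 →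
      (∫ p in (Set.Ioi (0:ℝ)) ×ˢ (Set.Ioi (0:ℝ)),
          ii p.1 p.2 * (fderiv ℝ φ p (1, 0) + fderiv ℝ φ p (0, 1)))
        = ∫ t in Set.Ioi (0:ℝ), ilim t * φ (t, ti) := by
  intro φ hφ hφc hφs
  set g : ℝ → ℝ := (Iic 0).piecewise (fun s => i0 (-s)) b
  have hg : LocallyIntegrable g :=
    .piecewise measurableSet_Iic (hi0_cont.comp continuous_neg).locallyIntegrable
      hb_cont.locallyIntegrable
  have hii_eq : ∀ t x, ii t x = if x < ti then g (t - x) else 0 := fun t x => by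
    by_cases hx : ti ≤ x <;> by_cases htx : t ≤ x <;> simp [hii, g, hx, htx]
  have hilim_eq : ∀ t, ilim t = g (t - ti) := fun t => by
    by_cases ht : t ≤ ti <;> simp [hilim, g, ht]
  have hφ_out : ∀ p ∉ Ioi 0 ×ˢ Ioi 0, φ p = 0 := fun p hp =>
    image_eq_zero_of_notMem_tsupport fun h => hp (hφs h)
  have hDφ_out : ∀ p ∉ Ioi 0 ×ˢ Ioi 0, fderiv ℝ φ p = 0 := fun p hp =>
    Function.notMem_support.mp fun h => hp (hφs (support_fderiv_subset ℝ h))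
  have hDφ : ∀ p, fderiv ℝ φ p (1, 0) + fderiv ℝ φ p (0, 1) = fderiv ℝ φ p (1, 1) := fun p => by
    rw [← map_add, Prod.mk_add_mk, add_zero, zero_add]
  calc (∫ p in Ioi (0:ℝ) ×ˢ Ioi (0:ℝ),
          ii p.1 p.2 * (fderiv ℝ φ p (1, 0) + fderiv ℝ φ p (0, 1)))
      = ∫ p, ii p.1 p.2 * fderiv ℝ φ p (1, 1) := by
        simp_rw [hDφ]
        exact setIntegral_eq_integral_of_forall_compl_eq_zero fun p hp => by simp [hDφ_out p hp]
    _ = ∫ p in {p : ℝ × ℝ | p.2 < ti}, g (p.1 - p.2) * fderiv ℝ φ p (1, 1) := by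
        rw [← integral_indicator (measurableSet_lt measurable_snd measurable_const)]
        congr 1 with p
        by_cases hp : p.2 < ti <;> simp [hii_eq, hp]
    _ = ∫ s, g s * φ (s + ti, ti) := setIntegral_snd_lt_mul_fderiv_one_one hg hφ hφc ti
    _ = ∫ t, ilim t * φ (t, ti) := by
        rw [← integral_add_right_eq_self (fun t => ilim t * φ (t, ti)) ti]
        simp [hilim_eq]
    _ = ∫ t in Ioi (0:ℝ), ilim t * φ (t, ti) :=
        (setIntegral_eq_integral_of_forall_compl_eq_zero fun t ht => by
          simp [hφ_out (t, ti) fun h => ht h.1]).symm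

/-- With deterministic infectious periods of length t_i, the age density solves
    ∂ī/∂t + ∂ī/∂x = −δ_{t_i}(x) ī in the distributional sense: against every C¹ test
    function compactly supported in (0,∞)², the distributional identity reads
    ∬ ī (∂_tφ + ∂_xφ) = ∫ ī(t,t_i⁻) φ(t,t_i) dt. -/
theorem deterministic_period_PDE_distributional
    (ti : ℝ) (hti : 0 < ti)
    (i0 b : ℝ → ℝ) (hi0_cont : Continuous i0) (hi0_nonneg : ∀ x, 0 ≤ i0 x)
    (hb_cont : Continuous b) (hb_nonneg : ∀ t, 0 ≤ b t)
    (ii : ℝ → ℝ → ℝ)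
    (hii : ∀ t x, ii t x =
      if ti ≤ x then 0 else if t ≤ x then i0 (x - t) else b (t - x))
    (ilim : ℝ → ℝ)
    (hilim : ∀ t, ilim t = if t ≤ ti then i0 (ti - t) else b (t - ti)) :
    ∀ φ : ℝ × ℝ → ℝ, ContDiff ℝ 1 φ → HasCompactSupport φ →
      tsupport φ ⊆ Set.Ioi 0 ×ˢ Set.Ioi 0 →
      (∫ p in (Set.Ioi (0:ℝ)) ×ˢ (Set.Ioi (0:ℝ)),
          ii p.1 p.2 * (fderiv ℝ φ p (1, 0) + fderiv ℝ φ p (0, 1)))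
        = ∫ t in Set.Ioi (0:ℝ), ilim t * φ (t, ti) :=
  deterministic_period_PDE_distributional_general ti i0 b hi0_cont hb_cont ii hii ilim hilim
end

section
/- Let λ* > 0, S̄₀ ∈ (0,1], λ̄ : ℝ≥0 → [0, λ*] measurable, and g : ℝ≥0 → [0, λ* (1−S̄₀)] measurable. Define the iteration u⁽⁰⁾ ≡ 0 and u⁽ⁿ⁺¹⁾(t) = (S̄₀ − ∫₀ᵗ u⁽ⁿ⁾(s) ds)⁺ · (g(t) + ∫₀ᵗ λ̄(t−s) u⁽ⁿ⁾(s) ds). Then on any interval [0,T], sup_{t≤T} |u⁽ⁿ⁺¹⁾(t) − u⁽ⁿ⁾(t)| ≤ (2λ*)ⁿ Tⁿ/n! · sup_{t≤T} |u⁽¹⁾(t) − u⁽⁰⁾(t)|, provided ∫₀ᵗ u⁽ⁿ⁾(s) ds ≤ S̄₀ for all n and t ≤ T; consequently (u⁽ⁿ⁾) is uniformly Cauchy on [0,T]. -/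
/-!
Write the Picard map as `Φ v t = P v t * Q v t` with `P v t = (S̄₀ - ∫₀ᵗ v)⁺` and
`Q v t = g t + ∫₀ᵗ λ̄ (t - s) v s ds`. For nonnegative iterates `0 ≤ P ≤ 1`, and the a priori
bound `∫₀ᵗ u⁽ⁿ⁾ ≤ S̄₀` together with `g ≤ λ* (1 - S̄₀)` gives `0 ≤ Q ≤ λ*`. Splitting
`P Q - P' Q' = P (Q - Q') + (P - P') Q'`, both factor differences are controlled by `∫₀ᵗ |v - w|`,
so `|Φ v t - Φ w t| ≤ 2 λ* ∫₀ᵗ |v - w|`. Iterating this Volterra inequality produces the factor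
`(2 λ* t)ⁿ / n!`, which is summable, and the Weierstrass M-test gives uniform Cauchyness.
-/

open MeasureTheory intervalIntegral
open Set Filter
open scoped Nat

theorem le_ciSup₂_of_bddAbove_image {α β : Type*} [ConditionallyCompleteLattice α] {f : β → α}
    {s : Set β} (H : BddAbove (f '' s)) {c : β} (hc : c ∈ s) : f c ≤ ⨆ x ∈ s, f x := by
  obtain ⟨C, hC⟩ := H
  refine le_ciSup₂ (f := fun x (_ : x ∈ s) => f x) ⟨C, ?_⟩ c hc
  rintro _ ⟨_, ⟨x, rfl⟩, ⟨hx, rfl⟩⟩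
  exact hC (mem_image_of_mem f hx)

theorem uniformCauchySeqOn_of_norm_sub_le {β F : Type*} [NormedAddCommGroup F] [CompleteSpace F]
    {f : ℕ → β → F} {b : ℕ → ℝ} {s : Set β} (hb : Summable b)
    (h : ∀ n, ∀ x ∈ s, ‖f (n + 1) x - f n x‖ ≤ b n) : UniformCauchySeqOn f atTop s := by
  have hsum :=
    (tendstoUniformlyOn_tsum_nat hb (f := fun n x => f (n + 1) x - f n x) h).uniformCauchySeqOn
  rw [Metric.uniformCauchySeqOn_iff] at hsum ⊢
  intro ε hε
  obtain ⟨N, hN⟩ := hsum ε hε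
  refine ⟨N, fun m hm n hn x hx => ?_⟩
  simpa only [Finset.sum_range_sub (f · x), dist_sub_right] using hN m hm n hn x hx

theorem integral_pow_div_factorial (n : ℕ) (t : ℝ) :
    ∫ s in (0 : ℝ)..t, s ^ n / n ! = t ^ (n + 1) / (n + 1)! := by
  rw [intervalIntegral.integral_div, integral_pow, Nat.factorial_succ]
  push_cast
  field_simp
  ring

theorem le_pow_mul_pow_div_factorial_of_le_integral {K M T : ℝ} (hK : 0 ≤ K) {d : ℕ → ℝ → ℝ}
    (hd : ∀ n, Continuous (d n)) (h0 : ∀ t ∈ Icc 0 T, d 0 t ≤ M)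
    (hsucc : ∀ n, ∀ t ∈ Icc 0 T, d (n + 1) t ≤ K * ∫ s in (0 : ℝ)..t, d n s) :
    ∀ n, ∀ t ∈ Icc 0 T, d n t ≤ K ^ n * t ^ n / n ! * M := by
  intro n
  induction n with
  | zero => simpa using h0
  | succ n ih =>
    intro t ht
    have hint : ∫ s in (0 : ℝ)..t, d n s ≤ ∫ s in (0 : ℝ)..t, K ^ n * M * (s ^ n / n !) := by
      refine integral_mono_on ht.1 ((hd n).intervalIntegrable _ _)
        (by apply Continuous.intervalIntegrable; fun_prop) fun s hs => ?_
      calc d n s ≤ K ^ n * s ^ n / n ! * M := ih s ⟨hs.1, hs.2.trans ht.2⟩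
        _ = K ^ n * M * (s ^ n / n !) := by ring
    calc d (n + 1) t ≤ K * ∫ s in (0 : ℝ)..t, d n s := hsucc n t ht
      _ ≤ K * ∫ s in (0 : ℝ)..t, K ^ n * M * (s ^ n / n !) := mul_le_mul_of_nonneg_left hint hK
      _ = K ^ (n + 1) * t ^ (n + 1) / (n + 1)! * M := by
        rw [intervalIntegral.integral_const_mul, integral_pow_div_factorial]
        ring

section Kernel

variable {L t : ℝ} {lam : ℝ → ℝ}

theorem intervalIntegrable_comp_sub_mul (hlam : ∀ t, 0 ≤ t → lam t ∈ Icc 0 L)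
    (hlam_meas : Measurable lam) {v : ℝ → ℝ} (hv : Continuous v) (ht : 0 ≤ t) :
    IntervalIntegrable (fun s => lam (t - s) * v s) volume 0 t := by
  rw [intervalIntegrable_iff_integrableOn_Ioc_of_le ht]
  refine Integrable.bdd_mul (c := L) hv.integrableOn_Ioc
    (hlam_meas.comp (measurable_const.sub measurable_id)).aestronglyMeasurable ?_
  filter_upwards [ae_restrict_mem measurableSet_Ioc] with s hs
  have hs' := hlam (t - s) (sub_nonneg.2 hs.2)
  rw [Real.norm_of_nonneg hs'.1]
  exact hs'.2

theorem integral_comp_sub_mul_nonneg (hlam : ∀ t, 0 ≤ t → lam t ∈ Icc 0 L) {v : ℝ → ℝ}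
    (hv : ∀ s ∈ Icc 0 t, 0 ≤ v s) (ht : 0 ≤ t) :
    0 ≤ ∫ s in (0 : ℝ)..t, lam (t - s) * v s :=
  integral_nonneg ht fun s hs => mul_nonneg (hlam _ (sub_nonneg.2 hs.2)).1 (hv s hs)

theorem integral_comp_sub_mul_le (hlam : ∀ t, 0 ≤ t → lam t ∈ Icc 0 L)
    (hlam_meas : Measurable lam) {v : ℝ → ℝ} (hv_cont : Continuous v)
    (hv : ∀ s ∈ Icc 0 t, 0 ≤ v s) (ht : 0 ≤ t) :
    ∫ s in (0 : ℝ)..t, lam (t - s) * v s ≤ L * ∫ s in (0 : ℝ)..t, v s := by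
  rw [← intervalIntegral.integral_const_mul]
  refine integral_mono_on ht (intervalIntegrable_comp_sub_mul hlam hlam_meas hv_cont ht)
    ((hv_cont.intervalIntegrable _ _).const_mul L) fun s hs => ?_
  exact mul_le_mul_of_nonneg_right (hlam _ (sub_nonneg.2 hs.2)).2 (hv s hs)

theorem abs_integral_comp_sub_mul_sub_le (hlam : ∀ t, 0 ≤ t → lam t ∈ Icc 0 L)
    (hlam_meas : Measurable lam) {v w : ℝ → ℝ} (hv : Continuous v) (hw : Continuous w)
    (ht : 0 ≤ t) :
    |(∫ s in (0 : ℝ)..t, lam (t - s) * v s) - ∫ s in (0 : ℝ)..t, lam (t - s) * w s| ≤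
      L * ∫ s in (0 : ℝ)..t, |v s - w s| := by
  rw [← intervalIntegral.integral_sub (intervalIntegrable_comp_sub_mul hlam hlam_meas hv ht)
    (intervalIntegrable_comp_sub_mul hlam hlam_meas hw ht)]
  simp only [← mul_sub]
  calc |∫ s in (0 : ℝ)..t, lam (t - s) * (v s - w s)|
      ≤ ∫ s in (0 : ℝ)..t, lam (t - s) * |v s - w s| := by
        refine (abs_integral_le_integral_abs ht).trans_eq (integral_congr fun s hs => ?_)
        rw [uIcc_of_le ht] at hs
        rw [abs_mul, abs_of_nonneg (hlam _ (sub_nonneg.2 hs.2)).1]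
    _ ≤ L * ∫ s in (0 : ℝ)..t, |v s - w s| :=
        integral_comp_sub_mul_le hlam hlam_meas (hv.sub hw).abs (fun _ _ => abs_nonneg _) ht

end Kernel

theorem abs_max_integral_sub_max_integral_le {S0 t : ℝ} {v w : ℝ → ℝ} (hv : Continuous v)
    (hw : Continuous w) (ht : 0 ≤ t) :
    |max (S0 - ∫ s in (0 : ℝ)..t, v s) 0 - max (S0 - ∫ s in (0 : ℝ)..t, w s) 0| ≤
      ∫ s in (0 : ℝ)..t, |v s - w s| :=
  calc _ ≤ |(S0 - ∫ s in (0 : ℝ)..t, v s) - (S0 - ∫ s in (0 : ℝ)..t, w s)| :=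
        abs_max_sub_max_le_abs _ _ _
    _ = |∫ s in (0 : ℝ)..t, (w s - v s)| := by
        rw [intervalIntegral.integral_sub (hw.intervalIntegrable _ _) (hv.intervalIntegrable _ _)]
        ring_nf
    _ ≤ ∫ s in (0 : ℝ)..t, |v s - w s| := by
        simpa only [abs_sub_comm] using abs_integral_le_integral_abs (f := fun s => w s - v s) ht

noncomputable def picardStep (S0 : ℝ) (lam g v : ℝ → ℝ) (t : ℝ) : ℝ :=
  max (S0 - ∫ s in (0 : ℝ)..t, v s) 0 * (g t + ∫ s in (0 : ℝ)..t, lam (t - s) * v s)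

section PicardStep

variable {S0 L t : ℝ} {lam g v w : ℝ → ℝ}

theorem picardStep_nonneg (hlam : ∀ t, 0 ≤ t → lam t ∈ Icc 0 L) (hg : 0 ≤ g t)
    (hv : ∀ s ∈ Icc 0 t, 0 ≤ v s) (ht : 0 ≤ t) : 0 ≤ picardStep S0 lam g v t :=
  mul_nonneg (le_max_right _ _) (add_nonneg hg (integral_comp_sub_mul_nonneg hlam hv ht))

theorem abs_picardStep_sub_le (hS0 : S0 ≤ 1) (hlam : ∀ t, 0 ≤ t → lam t ∈ Icc 0 L)
    (hlam_meas : Measurable lam) (hg : g t ∈ Icc 0 (L * (1 - S0)))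
    (hv_cont : Continuous v) (hw_cont : Continuous w) (hv : ∀ s ∈ Icc 0 t, 0 ≤ v s)
    (hw : ∀ s ∈ Icc 0 t, 0 ≤ w s) (hw_int : ∫ s in (0 : ℝ)..t, w s ≤ S0) (ht : 0 ≤ t) :
    |picardStep S0 lam g v t - picardStep S0 lam g w t| ≤
      2 * L * ∫ s in (0 : ℝ)..t, |v s - w s| := by
  set I := ∫ s in (0 : ℝ)..t, |v s - w s|
  set Pv := max (S0 - ∫ s in (0 : ℝ)..t, v s) 0
  set Pw := max (S0 - ∫ s in (0 : ℝ)..t, w s) 0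
  set Qv := g t + ∫ s in (0 : ℝ)..t, lam (t - s) * v s
  set Qw := g t + ∫ s in (0 : ℝ)..t, lam (t - s) * w s
  have hL : 0 ≤ L := (hlam 0 le_rfl).1.trans (hlam 0 le_rfl).2
  have hPv : |Pv| ≤ 1 := by
    rw [abs_of_nonneg (le_max_right _ _)]
    exact max_le (by linarith [integral_nonneg (μ := volume) ht hv]) zero_le_one
  have hQw : |Qw| ≤ L := by
    have hQw_nonneg : 0 ≤ Qw := add_nonneg hg.1 (integral_comp_sub_mul_nonneg hlam hw ht)
    rw [abs_of_nonneg hQw_nonneg]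
    linarith [hg.2, integral_comp_sub_mul_le hlam hlam_meas hw_cont hw ht,
      mul_le_mul_of_nonneg_left hw_int hL]
  have hPd : |Pv - Pw| ≤ I := abs_max_integral_sub_max_integral_le hv_cont hw_cont ht
  have hQd : |Qv - Qw| ≤ L * I := by
    simpa only [Qv, Qw, add_sub_add_left_eq_sub] using
      abs_integral_comp_sub_mul_sub_le hlam hlam_meas hv_cont hw_cont ht
  calc |Pv * Qv - Pw * Qw| = |Pv * (Qv - Qw) + (Pv - Pw) * Qw| := by ring_nf
    _ ≤ |Pv| * |Qv - Qw| + |Pv - Pw| * |Qw| := by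
        simpa only [abs_mul] using abs_add_le (Pv * (Qv - Qw)) ((Pv - Pw) * Qw)
    _ ≤ 1 * (L * I) + I * L := by gcongr; exact (abs_nonneg _).trans hPd
    _ = 2 * L * I := by ring

end PicardStep

theorem picard_iteration_cauchy_general
    (lamStar T : ℝ)
    (S0 : ℝ) (hS0 : S0 ∈ Set.Ioc (0:ℝ) 1)
    (lam : ℝ → ℝ) (hlam_meas : Measurable lam)
    (hlam_bdd : ∀ t, 0 ≤ t → lam t ∈ Set.Icc 0 lamStar)
    (g : ℝ → ℝ)
    (hg_bdd : ∀ t, 0 ≤ t → g t ∈ Set.Icc 0 (lamStar * (1 - S0)))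
    (u : ℕ → ℝ → ℝ)
    (hu_cont : ∀ n, Continuous (u n))
    (hu0 : ∀ t, u 0 t = 0)
    (hu_rec : ∀ n t, 0 ≤ t →
      u (n + 1) t = max (S0 - ∫ s in (0:ℝ)..t, u n s) 0 *
        (g t + ∫ s in (0:ℝ)..t, lam (t - s) * u n s))
    (hu_int : ∀ n, ∀ t ∈ Set.Icc (0:ℝ) T, (∫ s in (0:ℝ)..t, u n s) ≤ S0) :
    (∀ n, ∀ t ∈ Set.Icc (0:ℝ) T,
      |u (n + 1) t - u n t| ≤
        (2 * lamStar) ^ n * T ^ n / (n.factorial : ℝ) *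
          (⨆ s ∈ Set.Icc (0:ℝ) T, |u 1 s - u 0 s|)) ∧
    UniformCauchySeqOn u Filter.atTop (Set.Icc 0 T) := by
  set M := ⨆ s ∈ Set.Icc (0:ℝ) T, |u 1 s - u 0 s|
  have hL : 0 ≤ lamStar := (hlam_bdd 0 le_rfl).1.trans (hlam_bdd 0 le_rfl).2
  have hu_nonneg : ∀ n t, 0 ≤ t → 0 ≤ u n t := by
    intro n
    induction n with
    | zero => simp [hu0]
    | succ n ih =>
      intro t ht
      rw [hu_rec n t ht]
      exact picardStep_nonneg hlam_bdd (hg_bdd t ht).1 (fun s hs => ih s hs.1) ht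
  have hM : ∀ t ∈ Icc 0 T, |u 1 t - u 0 t| ≤ M :=
    fun t ht => le_ciSup₂_of_bddAbove_image (isCompact_Icc.bddAbove_image
      ((hu_cont 1).sub (hu_cont 0)).abs.continuousOn) ht
  have hstep : ∀ n, ∀ t ∈ Icc 0 T, |u (n + 2) t - u (n + 1) t| ≤
      2 * lamStar * ∫ s in (0 : ℝ)..t, |u (n + 1) s - u n s| := by
    intro n t ht
    rw [hu_rec (n + 1) t ht.1, hu_rec n t ht.1]
    exact abs_picardStep_sub_le hS0.2 hlam_bdd hlam_meas (hg_bdd t ht.1) (hu_cont _) (hu_cont _)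
      (fun s hs => hu_nonneg _ s hs.1) (fun s hs => hu_nonneg _ s hs.1)
      (hu_int n t ht) ht.1
  have hfactorial := le_pow_mul_pow_div_factorial_of_le_integral (by positivity)
    (fun n => ((hu_cont (n + 1)).sub (hu_cont n)).abs) hM hstep
  have hsucc : ∀ n, ∀ t ∈ Icc 0 T,
      |u (n + 1) t - u n t| ≤ (2 * lamStar) ^ n * T ^ n / n ! * M := by
    intro n t ht
    have hM_nonneg : 0 ≤ M := (abs_nonneg _).trans (hM t ht)
    refine (hfactorial n t ht).trans ?_
    gcongr
    exacts [ht.1, ht.2]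
  refine ⟨hsucc, uniformCauchySeqOn_of_norm_sub_le
    ((Real.summable_pow_div_factorial (2 * lamStar * T)).mul_right M) fun n t ht => ?_⟩
  simpa only [Real.norm_eq_abs, mul_pow] using hsucc n t ht

/-- Picard iteration for the boundary Volterra equation: factorial contraction estimate
    and uniform Cauchyness on [0,T]. -/
theorem picard_iteration_cauchy
    (lamStar T : ℝ) (hlamStar : 0 < lamStar) (hT : 0 < T)
    (S0 : ℝ) (hS0 : S0 ∈ Set.Ioc (0:ℝ) 1)
    (lam : ℝ → ℝ) (hlam_meas : Measurable lam)
    (hlam_bdd : ∀ t, 0 ≤ t → lam t ∈ Set.Icc 0 lamStar)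
    (g : ℝ → ℝ) (hg_meas : Measurable g)
    (hg_bdd : ∀ t, 0 ≤ t → g t ∈ Set.Icc 0 (lamStar * (1 - S0)))
    (u : ℕ → ℝ → ℝ)
    (hu_cont : ∀ n, Continuous (u n))
    (hu0 : ∀ t, u 0 t = 0)
    (hu_rec : ∀ n t, 0 ≤ t →
      u (n + 1) t = max (S0 - ∫ s in (0:ℝ)..t, u n s) 0 *
        (g t + ∫ s in (0:ℝ)..t, lam (t - s) * u n s))
    (hu_int : ∀ n, ∀ t ∈ Set.Icc (0:ℝ) T, (∫ s in (0:ℝ)..t, u n s) ≤ S0) :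
    (∀ n, ∀ t ∈ Set.Icc (0:ℝ) T,
      |u (n + 1) t - u n t| ≤
        (2 * lamStar) ^ n * T ^ n / (n.factorial : ℝ) *
          (⨆ s ∈ Set.Icc (0:ℝ) T, |u 1 s - u 0 s|)) ∧
    UniformCauchySeqOn u Filter.atTop (Set.Icc 0 T) :=
  picard_iteration_cauchy_general lamStar T S0 hS0 lam hlam_meas hlam_bdd g hg_bdd u hu_cont hu0
    hu_rec hu_int
end
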